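/- Let u(0), …, u(n−1) be an upper hull sequence. Then every point u(i) is an upper-hull point of the set {u(0), …, u(n−1)}; that is, all vertices of a concave chain lie on the upper hull of its point set. -/

import Mathlib

/-- The slope of the line through `p` and `q`. -/
noncomputable def slopeOf (p q : ℝ × ℝ) : ℝ := (q.2 - p.2) / (q.1 - p.1)

/-- An upper hull sequence: strictly increasing `x`-coordinates with strictly
decreasing consecutive slopes. -/
def IsUpperHullSeq {n : ℕ} (u : Fin n → ℝ × ℝ) : Prop :=
  (StrictMono fun i => (u i).1) ∧
  ∀ (i : ℕ) (h : i + 2 < n),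
    slopeOf (u ⟨i + 1, by omega⟩) (u ⟨i + 2, h⟩) <
      slopeOf (u ⟨i, by omega⟩) (u ⟨i + 1, by omega⟩)

/-- `p` is an upper-hull point of `S`: it belongs to `S` and admits a
supporting line of some slope `m` lying above all of `S`. -/
def IsUpperHullPoint (S : Set (ℝ × ℝ)) (p : ℝ × ℝ) : Prop :=
  p ∈ S ∧ ∃ m : ℝ, ∀ q ∈ S, q.2 ≤ p.2 + m * (q.1 - p.1)

/-! A line of slope `m` through `p` lies above `q` exactly when the intercept `q.2 - m * q.1` of
the parallel line through `q` is at most that of `p`. Along a concave chain the intercept for a fixed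
`m` increases while the edge slopes exceed `m` and decreases afterwards, so choosing `m` between the
slopes of the two edges at `u i` makes `u i` the maximiser of the intercept. -/

noncomputable def intercept (m : ℝ) (p : ℝ × ℝ) : ℝ := p.2 - m * p.1

theorem slopeOf_le_iff {p q : ℝ × ℝ} {m : ℝ} (h : p.1 < q.1) :
    slopeOf p q ≤ m ↔ intercept m q ≤ intercept m p := by
  rw [slopeOf, div_le_iff₀ (sub_pos.2 h), intercept, intercept]
  constructor <;> intro <;> linarith

theorem le_slopeOf_iff {p q : ℝ × ℝ} {m : ℝ} (h : p.1 < q.1) :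
    m ≤ slopeOf p q ↔ intercept m p ≤ intercept m q := by
  rw [slopeOf, le_div_iff₀ (sub_pos.2 h), intercept, intercept]
  constructor <;> intro <;> linarith

theorem AntitoneOn.exists_separating_value {s : ℕ → ℝ} {N : ℕ} (hs : AntitoneOn s (Set.Iio N))
    (i : ℕ) : ∃ m, (∀ j < i, j < N → m ≤ s j) ∧ ∀ j, i ≤ j → j < N → s j ≤ m := by
  refine ⟨s (min i (N - 1)), fun j hji hjN => ?_, fun j hij hjN => ?_⟩
  · exact hs (Set.mem_Iio.2 hjN) (Set.mem_Iio.2 (by omega)) (by omega)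
  · exact hs (Set.mem_Iio.2 (by omega)) (Set.mem_Iio.2 hjN) (by omega)

theorem intercept_le_of_slopeOf {p : ℕ → ℝ × ℝ} {n i j : ℕ} {m : ℝ}
    (hx : ∀ k, k + 1 < n → (p k).1 < (p (k + 1)).1)
    (hleft : ∀ k < i, m ≤ slopeOf (p k) (p (k + 1)))
    (hright : ∀ k, i ≤ k → k + 1 < n → slopeOf (p k) (p (k + 1)) ≤ m)
    (hi : i < n) (hj : j < n) : intercept m (p j) ≤ intercept m (p i) := by
  rcases le_total j i with hji | hij
  · refine monotoneOn_of_le_add_one (f := fun k => intercept m (p k)) Set.ordConnected_Iic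
      (fun k _ _ hk => ?_) hji (le_refl i) hji
    exact (le_slopeOf_iff (hx k (hk.trans_lt hi))).1 (hleft k hk)
  · refine antitoneOn_of_add_one_le (f := fun k => intercept m (p k)) Set.ordConnected_Icc
      (fun k _ hk hk1 => ?_) ⟨le_rfl, hij⟩ ⟨hij, le_rfl⟩ hij
    exact (slopeOf_le_iff (hx k (hk1.2.trans_lt hj))).1 (hright k hk.1 (hk1.2.trans_lt hj))

theorem IsUpperHullSeq.exists_nat_extension {n : ℕ} {u : Fin n → ℝ × ℝ} (hu : IsUpperHullSeq u) :
    ∃ p : ℕ → ℝ × ℝ, (∀ j : Fin n, p j = u j) ∧ (∀ k, k + 1 < n → (p k).1 < (p (k + 1)).1) ∧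
      AntitoneOn (fun k => slopeOf (p k) (p (k + 1))) (Set.Iio (n - 1)) := by
  refine ⟨fun k => if h : k < n then u ⟨k, h⟩ else 0, fun j => dif_pos j.2, fun k hk => ?_, ?_⟩
  · simp only [dif_pos hk, dif_pos (show k < n by omega)]
    exact hu.1 (Fin.mk_lt_mk.2 k.lt_succ_self)
  · refine (strictAntiOn_of_add_one_lt Set.ordConnected_Iio fun k _ _ hk => ?_).antitoneOn
    rw [Set.mem_Iio] at hk
    simp only [dif_pos (show k < n by omega), dif_pos (show k + 1 < n by omega),
      dif_pos (show k + 2 < n by omega)]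
    exact hu.2 k (by omega)

theorem concave_chain_vertices_on_upper_hull
    {n : ℕ} (u : Fin n → ℝ × ℝ) (hu : IsUpperHullSeq u) :
    ∀ i : Fin n, IsUpperHullPoint (Set.range u) (u i) := by
  intro i
  obtain ⟨p, hpu, hx, hs⟩ := hu.exists_nat_extension
  obtain ⟨m, hleft, hright⟩ := hs.exists_separating_value i
  refine ⟨⟨i, rfl⟩, m, ?_⟩
  rintro _ ⟨j, rfl⟩
  have key := intercept_le_of_slopeOf hx (fun k hk => hleft k hk (by omega))
    (fun k hik hk => hright k hik (by omega)) i.2 j.2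
  rw [hpu, hpu, intercept, intercept] at key
  linarith
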